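/- Let b ≥ 1 be an integer, let p be a sensor-deployment distribution, and let 0 < ε < 1. If the number of samples n satisfies n ≥ ( ln ε − ln(2b+1) ) / ln(1 − d_min(p)²), then (2b+1)·(1 − d_min(p)²)^n ≤ ε, and consequently the detection error probability satisfies e_n ≤ ε. -/

import Mathlib

open Finset Real MeasureTheory ProbabilityTheory

/-- The "gap" vector: `d 0 = √p₀`, `d i = √pᵢ - √p_{i-1}` for `i ≥ 1`. -/
noncomputable def dvec (p : ℕ → ℝ) (i : ℕ) : ℝ :=
  if i = 0 then Real.sqrt (p 0) else Real.sqrt (p i) - Real.sqrt (p (i - 1))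

/-- `d_min(p) = min_{0 ≤ i ≤ 2b} d_i(p)`. -/
noncomputable def dmin (b : ℕ) (p : ℕ → ℝ) : ℝ :=
  (Finset.range (2 * b + 1)).inf' (Finset.nonempty_range_iff.mpr (by omega)) (dvec p)

/-- A sensor-deployment distribution: `0 < p₀ < p₁ < ⋯ < p_{2b}` and `∑ pᵢ = 1`. -/
def IsSensorDist (b : ℕ) (p : ℕ → ℝ) : Prop :=
  0 < p 0 ∧ (∀ i, i < 2 * b → p i < p (i + 1)) ∧ ∑ i ∈ Finset.range (2 * b + 1), p i = 1


/-! The failure event lies in the union of `{N₀ = 0}` and the events `{N_{i+1} ≤ N_i}` for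
`i < 2b`, so it suffices to bound each of these `2b + 1` events by `(1 - d_min²)ⁿ`. For `{N₀ = 0}`
this is independence: its probability is `(1 - p₀)ⁿ = (1 - d₀²)ⁿ`. For `{N_{i+1} ≤ N_i}` it is a
Chernoff bound with the Bhattacharyya weight `w = λ` on `i`, `λ⁻¹` on `i + 1` and `1` elsewhere,
`λ = √(p_{i+1} / p_i) ≥ 1`: on the event `∏ⱼ w(Xⱼ) = λ^(N_i - N_{i+1}) ≥ 1`, while
`E w(Xⱼ) = 2 √(p_i p_{i+1}) + 1 - p_i - p_{i+1} = 1 - d_{i+1}²`. -/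

open scoped ENNReal

theorem prod_ite_ite_eq_pow_mul_pow {ι α M : Type*} [Fintype ι] [DecidableEq α] [CommMonoid M]
    (x : ι → α) {u v : α} (huv : u ≠ v) (s t : M) :
    ∏ i, (if x i = u then s else if x i = v then t else 1)
      = s ^ #{i | x i = u} * t ^ #{i | x i = v} := by
  rw [prod_ite, prod_const, prod_ite, prod_const, prod_const_one, mul_one, filter_filter]
  congr 3
  ext i
  simp only [mem_filter, mem_univ, true_and, and_iff_right_iff_imp]
  rintro rfl
  exact huv.symm

section Independence

variable {Ω ι α : Type*} [MeasurableSpace Ω] [MeasurableSpace α] [Fintype ι]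
  {μ : Measure Ω} {X : ι → Ω → α}

theorem measure_le_prod_lintegral_of_one_le_prod (hX : ∀ i, Measurable (X i))
    (hindep : iIndepFun X μ) {f : α → ℝ≥0∞} (hf : Measurable f) {S : Set Ω}
    (hS : ∀ ω ∈ S, 1 ≤ ∏ i, f (X i ω)) :
    μ S ≤ ∏ i, ∫⁻ ω, f (X i ω) ∂μ :=
  calc μ S ≤ μ {ω | 1 ≤ ∏ i, f (X i ω)} := measure_mono hS
    _ ≤ ∫⁻ ω, ∏ i, f (X i ω) ∂μ := by
      simpa only [one_mul] using mul_meas_ge_le_lintegral₀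
        (by fun_prop : Measurable fun ω => ∏ i, f (X i ω)).aemeasurable 1
    _ = ∏ i, ∫⁻ ω, f (X i ω) ∂μ :=
      lintegral_prod_eq_prod_lintegral_of_indepFun _ _ (hindep.comp (fun _ => f) fun _ => hf)
        fun i => hf.comp (hX i)

variable [MeasurableSingletonClass α]

theorem measure_ne_and_ne_add [IsProbabilityMeasure μ] {Y : Ω → α} (hY : Measurable Y) {u v : α}
    (huv : u ≠ v) :
    μ {ω | Y ω ≠ u ∧ Y ω ≠ v} + (μ {ω | Y ω = u} + μ {ω | Y ω = v}) = 1 := by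
  have hu : MeasurableSet {ω | Y ω = u} := hY (measurableSet_singleton u)
  have hv : MeasurableSet {ω | Y ω = v} := hY (measurableSet_singleton v)
  have hcompl : {ω | Y ω ≠ u ∧ Y ω ≠ v} = ({ω | Y ω = u} ∪ {ω | Y ω = v})ᶜ := by
    ext ω
    simp only [Set.mem_ofPred_eq, Set.mem_compl_iff, Set.mem_union, not_or]
  rw [hcompl, ← measure_union (Set.disjoint_left.2 fun ω h₁ h₂ => huv (h₁.symm.trans h₂)) hv,
    add_comm, measure_add_measure_compl (hu.union hv), measure_univ]

variable [DecidableEq α]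

theorem lintegral_ite_ite {Y : Ω → α} (hY : Measurable Y) {u v : α}
    (huv : u ≠ v) (s t : ℝ≥0∞) :
    ∫⁻ ω, (if Y ω = u then s else if Y ω = v then t else 1) ∂μ
      = s * μ {ω | Y ω = u} + t * μ {ω | Y ω = v} + μ {ω | Y ω ≠ u ∧ Y ω ≠ v} := by
  have hu : MeasurableSet {ω | Y ω = u} := hY (measurableSet_singleton u)
  have hv : MeasurableSet {ω | Y ω = v} := hY (measurableSet_singleton v)
  have hw : MeasurableSet {ω | Y ω ≠ u ∧ Y ω ≠ v} := hu.compl.inter hv.compl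
  have hsplit : (fun ω => if Y ω = u then s else if Y ω = v then t else 1)
      = fun ω => {ω | Y ω = u}.indicator (fun _ => s) ω + {ω | Y ω = v}.indicator (fun _ => t) ω
        + {ω | Y ω ≠ u ∧ Y ω ≠ v}.indicator 1 ω := by
    ext ω
    by_cases h₁ : Y ω = u
    · simp [Set.indicator, h₁, huv]
    · by_cases h₂ : Y ω = v <;> simp [Set.indicator, h₁, h₂, huv.symm]
  rw [hsplit, lintegral_add_right _ (measurable_one.indicator hw),
    lintegral_add_right _ (measurable_const.indicator hv), lintegral_indicator_const hu,
    lintegral_indicator_const hv, lintegral_indicator_one hw]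

theorem measure_card_eq_zero [IsProbabilityMeasure μ] (hX : ∀ i, Measurable (X i))
    (hindep : iIndepFun X μ) {u : α} {a : ℝ} (ha : 0 ≤ a)
    (hu : ∀ i, μ {ω | X i ω = u} = ENNReal.ofReal a) :
    μ {ω | #{i | X i ω = u} = 0} = ENNReal.ofReal (1 - a) ^ Fintype.card ι := by
  have hset : {ω | #{i | X i ω = u} = 0} = ⋂ i, X i ⁻¹' {u}ᶜ := by
    ext ω
    simp [filter_eq_empty_iff]
  have hcompl (i : ι) : μ (X i ⁻¹' {u}ᶜ) = ENNReal.ofReal (1 - a) := by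
    have hui : μ (X i ⁻¹' {u}) = ENNReal.ofReal a := hu i
    rw [Set.preimage_compl, prob_compl_eq_one_sub (hX i (measurableSet_singleton u)), hui,
      ENNReal.ofReal_sub _ ha, ENNReal.ofReal_one]
  rw [hset, hindep.meas_iInter fun i => ⟨{u}ᶜ, (measurableSet_singleton u).compl, rfl⟩]
  simp only [hcompl, prod_const, card_univ]

theorem lintegral_ofReal_ite_ite [IsProbabilityMeasure μ] {Y : Ω → α} (hY : Measurable Y)
    {u v : α} (huv : u ≠ v) {a c s t : ℝ} (ha : 0 ≤ a) (hc : 0 ≤ c) (hs : 0 ≤ s) (ht : 0 ≤ t)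
    (hu : μ {ω | Y ω = u} = ENNReal.ofReal a) (hv : μ {ω | Y ω = v} = ENNReal.ofReal c) :
    ∫⁻ ω, (if Y ω = u then ENNReal.ofReal s else if Y ω = v then ENNReal.ofReal t else 1) ∂μ
      = ENNReal.ofReal (s * a + t * c + (1 - a - c)) := by
  have hpart := measure_ne_and_ne_add (μ := μ) hY huv
  rw [hu, hv, ← ENNReal.ofReal_add ha hc] at hpart
  have hac : a + c ≤ 1 := ENNReal.ofReal_le_one.1 (le_of_add_le_right hpart.le)
  rw [lintegral_ite_ite hY huv, hu, hv, ENNReal.eq_sub_of_add_eq ENNReal.ofReal_ne_top hpart,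
    ← ENNReal.ofReal_one, ← ENNReal.ofReal_sub _ (by positivity), ← ENNReal.ofReal_mul hs,
    ← ENNReal.ofReal_mul ht, ← ENNReal.ofReal_add (by positivity) (by positivity),
    ← ENNReal.ofReal_add (by positivity) (by linarith), sub_sub]

theorem measure_card_le_card_le [IsProbabilityMeasure μ] (hX : ∀ i, Measurable (X i))
    (hindep : iIndepFun X μ) {u v : α} (huv : u ≠ v) {a c : ℝ} (ha : 0 < a) (hac : a ≤ c)
    (hu : ∀ i, μ {ω | X i ω = u} = ENNReal.ofReal a)
    (hv : ∀ i, μ {ω | X i ω = v} = ENNReal.ofReal c) :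
    μ {ω | #{i | X i ω = v} ≤ #{i | X i ω = u}}
      ≤ ENNReal.ofReal (1 - (√c - √a) ^ 2) ^ Fintype.card ι := by
  have hc : 0 < c := ha.trans_le hac
  set s := √c / √a with hs
  have hs0 : 0 < s := by positivity
  have hs1 : 1 ≤ s := (one_le_div (by positivity)).2 (Real.sqrt_le_sqrt hac)
  have hmean : s * a + s⁻¹ * c + (1 - a - c) = 1 - (√c - √a) ^ 2 := by
    have hsa : s * a = √a * √c := by
      rw [hs, div_mul_eq_mul_div, div_eq_iff (by positivity)]
      linear_combination (-√c) * Real.mul_self_sqrt ha.le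
    have hsc : s⁻¹ * c = √a * √c := by
      rw [hs, inv_div, div_mul_eq_mul_div, div_eq_iff (by positivity)]
      linear_combination (-√a) * Real.mul_self_sqrt hc.le
    rw [hsa, hsc]
    nlinarith [Real.sq_sqrt ha.le, Real.sq_sqrt hc.le]
  set f : α → ℝ≥0∞ := fun x =>
    if x = u then ENNReal.ofReal s else if x = v then ENNReal.ofReal s⁻¹ else 1
  have hf : Measurable f := .ite (measurableSet_singleton u) measurable_const
    (.ite (measurableSet_singleton v) measurable_const measurable_const)
  calc μ _ ≤ ∏ i, ∫⁻ ω, f (X i ω) ∂μ :=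
        measure_le_prod_lintegral_of_one_le_prod hX hindep hf fun ω hω => ?_
    _ = ∏ _i : ι, ENNReal.ofReal (1 - (√c - √a) ^ 2) := prod_congr rfl fun i _ => by
        rw [← hmean]
        exact lintegral_ofReal_ite_ite (hX i) huv ha.le hc.le hs0.le (inv_nonneg.2 hs0.le)
          (hu i) (hv i)
    _ = _ := by rw [prod_const, card_univ]
  rw [prod_ite_ite_eq_pow_mul_pow _ huv, ← ENNReal.ofReal_pow hs0.le,
    ← ENNReal.ofReal_pow (inv_nonneg.2 hs0.le), ← ENNReal.ofReal_mul (by positivity),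
    ENNReal.one_le_ofReal, inv_pow, ← div_eq_mul_inv, one_le_div (by positivity)]
  exact pow_le_pow_right₀ hs1 hω

end Independence

theorem measure_not_pos_and_chain_le {Ω : Type*} [MeasurableSpace Ω] {μ : Measure Ω}
    {N : ℕ → Ω → ℕ} {m : ℕ} {c : ℝ≥0∞} (h₀ : μ {ω | N 0 ω = 0} ≤ c)
    (hsucc : ∀ i < m, μ {ω | N (i + 1) ω ≤ N i ω} ≤ c) :
    μ {ω | ¬ (0 < N 0 ω ∧ ∀ i < m, N i ω < N (i + 1) ω)} ≤ (m + 1) * c := by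
  have hsub : {ω | ¬ (0 < N 0 ω ∧ ∀ i < m, N i ω < N (i + 1) ω)}
      ⊆ {ω | N 0 ω = 0} ∪ ⋃ i ∈ range m, {ω | N (i + 1) ω ≤ N i ω} := by
    intro ω hω
    simp only [Set.mem_union, Set.mem_iUnion, mem_range, Set.mem_ofPred_eq]
    by_contra! h
    exact hω ⟨Nat.pos_of_ne_zero h.1, h.2⟩
  calc μ _ ≤ μ {ω | N 0 ω = 0} + ∑ i ∈ range m, μ {ω | N (i + 1) ω ≤ N i ω} :=
        (measure_mono hsub).trans <| (measure_union_le _ _).trans <|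
          add_le_add le_rfl (measure_biUnion_finset_le _ _)
    _ ≤ c + ∑ _i ∈ range m, c := add_le_add h₀ (sum_le_sum fun i hi => hsucc i (mem_range.1 hi))
    _ = (m + 1) * c := by rw [sum_const, card_range, nsmul_eq_mul]; ring

theorem mul_pow_le_of_log_div_log_le {C r ε : ℝ} {n : ℕ} (hC : 0 < C) (hr₀ : 0 < r) (hr₁ : r < 1)
    (hε : 0 < ε) (hn : (log ε - log C) / log r ≤ n) : C * r ^ n ≤ ε := by
  have hlog : log r < 0 := log_neg hr₀ hr₁
  rw [← log_le_log_iff (by positivity) hε, log_mul hC.ne' (pow_ne_zero _ hr₀.ne'), log_pow]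
  linarith [(div_le_iff_of_neg hlog).1 hn]

section SensorDist

variable {b : ℕ} {p : ℕ → ℝ}

@[simp]
theorem dvec_zero : dvec p 0 = √(p 0) := if_pos rfl

@[simp]
theorem dvec_succ (i : ℕ) : dvec p (i + 1) = √(p (i + 1)) - √(p i) := if_neg i.succ_ne_zero

theorem dmin_le_dvec {i : ℕ} (hi : i ≤ 2 * b) : dmin b p ≤ dvec p i :=
  inf'_le _ (mem_range.2 (by omega))

namespace IsSensorDist

theorem pos (hp : IsSensorDist b p) {i : ℕ} (hi : i ≤ 2 * b) : 0 < p i := by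
  induction i with
  | zero => exact hp.1
  | succ k ih => exact (ih (by omega)).trans (hp.2.1 k (by omega))

theorem le_one (hp : IsSensorDist b p) {i : ℕ} (hi : i ≤ 2 * b) : p i ≤ 1 :=
  hp.2.2 ▸ single_le_sum (fun _ hj => (hp.pos (Nat.lt_succ_iff.1 (mem_range.1 hj))).le)
    (mem_range.2 (Nat.lt_succ_of_le hi))

theorem dvec_pos (hp : IsSensorDist b p) {i : ℕ} (hi : i ≤ 2 * b) : 0 < dvec p i := by
  cases i with
  | zero => simpa using hp.1
  | succ k => simpa using Real.sqrt_lt_sqrt (hp.pos (by omega)).le (hp.2.1 k (by omega))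

theorem dmin_pos (hp : IsSensorDist b p) : 0 < dmin b p :=
  (lt_inf'_iff _).2 fun _ hi => hp.dvec_pos (Nat.lt_succ_iff.1 (mem_range.1 hi))

theorem dmin_lt_one (hp : IsSensorDist b p) (hb : 1 ≤ b) : dmin b p < 1 :=
  calc dmin b p ≤ √(p 1) - √(p 0) := by simpa using dmin_le_dvec (p := p) (i := 1) (by omega)
    _ < √(p 1) := sub_lt_self _ (Real.sqrt_pos.2 hp.1)
    _ ≤ 1 := Real.sqrt_le_one.2 (hp.le_one (by omega))

theorem one_sub_dvec_sq_le (hp : IsSensorDist b p) {i : ℕ} (hi : i ≤ 2 * b) :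
    1 - dvec p i ^ 2 ≤ 1 - dmin b p ^ 2 := by
  gcongr
  · exact hp.dmin_pos.le
  · exact dmin_le_dvec hi

end IsSensorDist

end SensorDist

theorem sample_size_for_error_threshold_general (b n : ℕ) (hb : 1 ≤ b) (p : ℕ → ℝ)
    (hp : IsSensorDist b p)
    (ε : ℝ) (hε0 : 0 < ε)
    (hn : (Real.log ε - Real.log (2 * (b : ℝ) + 1)) / Real.log (1 - dmin b p ^ 2) ≤ (n : ℝ))
    {Ω : Type*} [MeasurableSpace Ω] (μ : Measure Ω) [IsProbabilityMeasure μ]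
    (X : Fin n → Ω → ℕ) (hXmeas : ∀ j, Measurable (X j))
    (hXindep : iIndepFun X μ)
    (hXdist : ∀ j, ∀ k ≤ 2 * b, μ {ω | X j ω = k} = ENNReal.ofReal (p k))
    (N : ℕ → Ω → ℕ)
    (hN : ∀ k ω, N k ω = (Finset.univ.filter fun j : Fin n => X j ω = k).card) :
    (2 * (b : ℝ) + 1) * (1 - dmin b p ^ 2) ^ n ≤ ε ∧
    (μ {ω | ¬ (0 < N 0 ω ∧ ∀ i < 2 * b, N i ω < N (i + 1) ω)}).toReal ≤ ε := by
  set r := 1 - dmin b p ^ 2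
  have hr₀ : 0 < r := by nlinarith [hp.dmin_pos, hp.dmin_lt_one hb]
  have hr₁ : r < 1 := by nlinarith [hp.dmin_pos]
  have hbound : (2 * (b : ℝ) + 1) * r ^ n ≤ ε :=
    mul_pow_le_of_log_div_log_le (by positivity) hr₀ hr₁ hε0 hn
  refine ⟨hbound, ENNReal.toReal_le_of_le_ofReal hε0.le ?_⟩
  have hterm {i : ℕ} (hi : i ≤ 2 * b) :
      ENNReal.ofReal (1 - dvec p i ^ 2) ^ n ≤ ENNReal.ofReal r ^ n := by
    gcongr
    exact hp.one_sub_dvec_sq_le hi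
  calc μ _ ≤ ((2 * b : ℕ) + 1) * ENNReal.ofReal r ^ n := by
        refine measure_not_pos_and_chain_le (μ := μ) ?_ fun i hi => ?_ <;> simp only [hN]
        · rw [measure_card_eq_zero hXmeas hXindep (hp.pos (Nat.zero_le _)).le
            fun j => hXdist j 0 (Nat.zero_le _), Fintype.card_fin]
          simpa [Real.sq_sqrt hp.1.le] using hterm (Nat.zero_le _)
        · refine (measure_card_le_card_le hXmeas hXindep (Nat.succ_ne_self i).symm
            (hp.pos (by omega)) (hp.2.1 i hi).le (fun j => hXdist j i (by omega))
            (fun j => hXdist j (i + 1) (by omega))).trans ?_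
          simpa using hterm (show i + 1 ≤ 2 * b by omega)
    _ = ENNReal.ofReal ((2 * b + 1) * r ^ n) := by
        rw [ENNReal.ofReal_mul (by positivity), ENNReal.ofReal_pow hr₀.le]
        norm_cast
    _ ≤ ENNReal.ofReal ε := ENNReal.ofReal_le_ofReal hbound

theorem sample_size_for_error_threshold (b n : ℕ) (hb : 1 ≤ b) (p : ℕ → ℝ)
    (hp : IsSensorDist b p)
    (ε : ℝ) (hε0 : 0 < ε) (hε1 : ε < 1)
    (hn : (Real.log ε - Real.log (2 * (b : ℝ) + 1)) / Real.log (1 - dmin b p ^ 2) ≤ (n : ℝ))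
    {Ω : Type*} [MeasurableSpace Ω] (μ : Measure Ω) [IsProbabilityMeasure μ]
    (X : Fin n → Ω → ℕ) (hXmeas : ∀ j, Measurable (X j))
    (hXindep : iIndepFun X μ)
    (hXdist : ∀ j, ∀ k ≤ 2 * b, μ {ω | X j ω = k} = ENNReal.ofReal (p k))
    (N : ℕ → Ω → ℕ)
    (hN : ∀ k ω, N k ω = (Finset.univ.filter fun j : Fin n => X j ω = k).card) :
    (2 * (b : ℝ) + 1) * (1 - dmin b p ^ 2) ^ n ≤ ε ∧
    (μ {ω | ¬ (0 < N 0 ω ∧ ∀ i < 2 * b, N i ω < N (i + 1) ω)}).toReal ≤ ε :=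
  sample_size_for_error_threshold_general b n hb p hp ε hε0 hn μ X hXmeas hXindep hXdist N hN
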